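/- Theorem 2.1, Hamiltonian part: Suppose (u_h, q_h, p_h) satisfy the semidiscrete DG scheme with zero source, with u_h and q_h depending differentiably on t and numerical traces û_h = {u_h}, q̂_h = {q_h} + τ_qu ⟦u_h⟧, p̂_h = {p_h} + τ_pu ⟦u_h⟧ at every node, where the (node-independent) parameters τ_qu, τ_pu : [0,T] → ℝ satisfy at every t: τ_pu Σ_{i=1}^N ⟦p_h⟧⟦u_h⟧(x_i) + ε τ_qu Σ_{i=1}^N ⟦∂_t u_h⟧⟦u_h⟧(x_i) = 0. Then the discrete Hamiltonian t ↦ Σ_{i=1}^N ∫_{I_i} ( (ε/2) q_h(x,t)² − V(u_h(x,t)) ) dx is constant on [0,T]. -/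

import Mathlib

/-!
Along a solution the Hamiltonian has time derivative `ε (q, q_t) - (f(u), u_t)`. Testing the
time derivative of the first equation with `q`, the second equation with `u_t` and the third with
`p`, and summing by parts periodically on each element, every volume term cancels and the
node terms that survive the choice of traces are `τ_pu η(p, u) + ε τ_qu η(u_t, u)`, which
vanishes by assumption.

The time derivatives of integrals of `G(u_h(x, t))` are taken through the values of `u_h` at
`k + 1` fixed nodes: these values determine a polynomial of degree at most `k` and are
differentiable in `t` by hypothesis.
-/

open Polynomial Set

noncomputable section

namespace DG

/-- A broken polynomial function in `W_h^k` (before imposing the degree bound):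
the polynomial indexed by `i` is the restriction of the function to
element `I_i = (x (i-1), x i)`, for `i = 1,…,N`. -/
abbrev Broken := ℕ → Polynomial ℝ

/-- Membership in `W_h^k`: every elementwise polynomial has degree at most `k`. -/
def DegLE (k : ℕ) (P : Broken) : Prop := ∀ i, (P i).natDegree ≤ k

/-- `(F, G) = Σ_{i=1}^N ∫_{I_i} F_i G_i dx` for families of functions on the elements. -/
def ip (x : ℕ → ℝ) (N : ℕ) (F G : ℕ → ℝ → ℝ) : ℝ :=
  ∑ i ∈ Finset.Icc 1 N, ∫ y in (x (i-1))..(x i), F i y * G i y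

/-- the family of real functions determined by a broken polynomial -/
def ev (P : Broken) : ℕ → ℝ → ℝ := fun i y => (P i).eval y

/-- elementwise spatial derivative -/
def dx (P : Broken) : Broken := fun i => (P i).derivative

/-- `⟨φ̂, v n⟩ = Σ_{i=1}^N [φ̂(x_i) v(x_i⁻) - φ̂(x_{i-1}) v(x_{i-1}⁺)]` where `φ̂` is a
numerical trace, i.e. a function on the node indices. -/
def bt (x : ℕ → ℝ) (N : ℕ) (φ : ℕ → ℝ) (v : Broken) : ℝ :=
  ∑ i ∈ Finset.Icc 1 N, (φ i * (v i).eval (x i) - φ (i - 1) * (v i).eval (x (i - 1)))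

/-- the one-sided limit `ζ(x_i⁻)` of a broken polynomial at the node `x_i`, `i = 1,…,N` -/
def lv (x : ℕ → ℝ) (P : Broken) (i : ℕ) : ℝ := (P i).eval (x i)

/-- the one-sided limit `ζ(x_i⁺)` at the node `x_i`, with the periodic identification
`ζ(x_N⁺) = ζ(x_0⁺)` -/
def rv (x : ℕ → ℝ) (N : ℕ) (P : Broken) (i : ℕ) : ℝ :=
  if i = N then (P 1).eval (x 0) else (P (i + 1)).eval (x i)

/-- the jump `⟦ζ⟧(x_i) = ζ(x_i⁻) - ζ(x_i⁺)` -/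
def jmp (x : ℕ → ℝ) (N : ℕ) (P : Broken) (i : ℕ) : ℝ := lv x P i - rv x N P i

/-- the average `{ζ}(x_i) = (ζ(x_i⁻) + ζ(x_i⁺))/2` -/
def avg (x : ℕ → ℝ) (N : ℕ) (P : Broken) (i : ℕ) : ℝ := (lv x P i + rv x N P i) / 2

/-- the jump `⟦g(ζ)⟧(x_i)` of a composition `g ∘ ζ` -/
def jmpC (x : ℕ → ℝ) (N : ℕ) (g : ℝ → ℝ) (P : Broken) (i : ℕ) : ℝ :=
  g (lv x P i) - g (rv x N P i)

/-- `η(w,v) = Σ_{i=1}^N ⟦w⟧⟦v⟧(x_i)` -/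
def eta (x : ℕ → ℝ) (N : ℕ) (w v : Broken) : ℝ :=
  ∑ i ∈ Finset.Icc 1 N, jmp x N w i * jmp x N v i

/-- the mesh `a = x 0 < x 1 < ⋯ < x N = b` -/
structure Mesh (a b : ℝ) (N : ℕ) (x : ℕ → ℝ) : Prop where
  hab : a < b
  hN : 1 ≤ N
  left : x 0 = a
  right : x N = b
  mono : ∀ i, i < N → x i < x (i + 1)

/-- `Pf` is the elementwise L²-projection of the function `y ↦ f(ζ(y))` onto `W_h^k`:
it has degree at most `k` and `∫_{I_i} (Pf - f(ζ)) w = 0` for every polynomial `w` of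
degree at most `k` and every element `i`. -/
def IsProj (x : ℕ → ℝ) (N k : ℕ) (f : ℝ → ℝ) (P Pf : Broken) : Prop :=
  DegLE k Pf ∧ ∀ i ∈ Finset.Icc 1 N, ∀ w : Polynomial ℝ, w.natDegree ≤ k →
    (∫ y in (x (i-1))..(x i), ((Pf i).eval y - f ((P i).eval y)) * w.eval y) = 0

/-- a numerical trace takes equal values at the nodes `x_0` and `x_N` -/
def IsTrace (N : ℕ) (φ : ℕ → ℝ) : Prop := φ 0 = φ N

/-- The semidiscrete DG scheme with zero source on `[0,T]`: `u q p : ℝ → Broken`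
are the approximations (depending differentiably on `t`, with time derivatives
`ut qt pt`), and `uh qh ph` are the (possibly `t`-dependent) numerical traces. -/
structure Scheme (x : ℕ → ℝ) (N k : ℕ) (T ε : ℝ) (f : ℝ → ℝ)
    (u q p ut qt pt : ℝ → Broken) (uh qh ph : ℝ → ℕ → ℝ) : Prop where
  degu : ∀ t ∈ Icc (0:ℝ) T, DegLE k (u t)
  degq : ∀ t ∈ Icc (0:ℝ) T, DegLE k (q t)
  degp : ∀ t ∈ Icc (0:ℝ) T, DegLE k (p t)
  degut : ∀ t ∈ Icc (0:ℝ) T, DegLE k (ut t)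
  trace_u : ∀ t ∈ Icc (0:ℝ) T, IsTrace N (uh t)
  trace_q : ∀ t ∈ Icc (0:ℝ) T, IsTrace N (qh t)
  trace_p : ∀ t ∈ Icc (0:ℝ) T, IsTrace N (ph t)
  du : ∀ t ∈ Icc (0:ℝ) T, ∀ i, ∀ y : ℝ,
    HasDerivWithinAt (fun s => ((u s) i).eval y) (((ut t) i).eval y) (Icc (0:ℝ) T) t
  dq : ∀ t ∈ Icc (0:ℝ) T, ∀ i, ∀ y : ℝ,
    HasDerivWithinAt (fun s => ((q s) i).eval y) (((qt t) i).eval y) (Icc (0:ℝ) T) t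
  dp : ∀ t ∈ Icc (0:ℝ) T, ∀ i, ∀ y : ℝ,
    HasDerivWithinAt (fun s => ((p s) i).eval y) (((pt t) i).eval y) (Icc (0:ℝ) T) t
  eq1 : ∀ t ∈ Icc (0:ℝ) T, ∀ v : Broken, DegLE k v →
    ip x N (ev (q t)) (ev v) + ip x N (ev (u t)) (ev (dx v)) - bt x N (uh t) v = 0
  eq2 : ∀ t ∈ Icc (0:ℝ) T, ∀ z : Broken, DegLE k z →
    ip x N (ev (p t)) (ev z) + ε * ip x N (ev (q t)) (ev (dx z)) - ε * bt x N (qh t) z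
      = ip x N (fun i y => f (((u t) i).eval y)) (ev z)
  eq3 : ∀ t ∈ Icc (0:ℝ) T, ∀ w : Broken, DegLE k w →
    ip x N (ev (ut t)) (ev w) - ip x N (ev (p t)) (ev (dx w)) + bt x N (ph t) w = 0

end DG

namespace DG

open Polynomial Finset MeasureTheory

section Lagrange

variable {k : ℕ}

def lagrangeNode (k : ℕ) (j : Fin (k + 1)) : ℝ := j

lemma injOn_lagrangeNode : Set.InjOn (lagrangeNode k) (univ : Finset (Fin (k + 1))) :=
  (Nat.cast_injective.comp Fin.val_injective).injOn

def lagrangeEval (k : ℕ) (y : ℝ) : (Fin (k + 1) → ℝ) →L[ℝ] ℝ :=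
  ∑ j, (Lagrange.basis univ (lagrangeNode k) j).eval y • ContinuousLinearMap.proj j

lemma lagrangeEval_apply (y : ℝ) (a : Fin (k + 1) → ℝ) :
    lagrangeEval k y a = (Lagrange.interpolate univ (lagrangeNode k) a).eval y := by
  simp [lagrangeEval, Lagrange.interpolate_apply, eval_finsetSum, mul_comm]

lemma lagrangeEval_eval_lagrangeNode {Q : ℝ[X]} (hQ : Q.natDegree ≤ k) (y : ℝ) :
    lagrangeEval k y (fun j => Q.eval (lagrangeNode k j)) = Q.eval y := by
  rw [lagrangeEval_apply, ← Lagrange.eq_interpolate injOn_lagrangeNode]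
  simpa using (degree_le_natDegree.trans_lt (by exact_mod_cast Nat.lt_succ_of_le hQ))

lemma continuous_lagrangeEval : Continuous (lagrangeEval k) :=
  continuous_finsetSum _ fun _ _ => (Polynomial.continuous _).smul continuous_const

end Lagrange

theorem hasFDerivAt_intervalIntegral_comp_clm {E : Type*} [NormedAddCommGroup E]
    [NormedSpace ℝ E] [ProperSpace E] {G G' : ℝ → ℝ → ℝ}
    (hG : Continuous (Function.uncurry G)) (hG' : Continuous (Function.uncurry G'))
    (hGG' : ∀ y z, HasDerivAt (G y) (G' y z) z)
    {Λ : ℝ → E →L[ℝ] ℝ} (hΛ : Continuous Λ) (a₀ : E) (c d : ℝ) :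
    HasFDerivAt (fun a => ∫ y in c..d, G y (Λ y a))
      (∫ y in c..d, G' y (Λ y a₀) • Λ y) a₀ := by
  have hΛa : Continuous fun p : ℝ × E => Λ p.1 p.2 :=
    (hΛ.comp continuous_fst).clm_apply continuous_snd
  have hF : Continuous fun p : ℝ × E => G p.1 (Λ p.1 p.2) :=
    hG.comp (continuous_fst.prodMk hΛa)
  have hF' : Continuous fun p : ℝ × E => G' p.1 (Λ p.1 p.2) • Λ p.1 :=
    (hG'.comp (continuous_fst.prodMk hΛa)).smul (hΛ.comp continuous_fst)
  obtain ⟨C, hC⟩ := ((isCompact_uIcc (a := c) (b := d)).prod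
    (isCompact_closedBall a₀ 1)).exists_bound_of_continuousOn hF'.continuousOn
  refine intervalIntegral.hasFDerivAt_integral_of_dominated_of_fderiv_le (μ := volume)
    (F' := fun a y => G' y (Λ y a) • Λ y) (bound := fun _ => C)
    (Metric.ball_mem_nhds a₀ one_pos) ?_ ?_ ?_ ?_ intervalIntegrable_const ?_
  · exact .of_forall fun _ =>
      (hF.comp (continuous_id.prodMk continuous_const)).aestronglyMeasurable
  · exact (hF.comp (continuous_id.prodMk continuous_const)).intervalIntegrable c d
  · exact (hF'.comp (continuous_id.prodMk continuous_const)).aestronglyMeasurable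
  · exact .of_forall fun y hy a ha =>
      hC (y, a) ⟨Set.uIoc_subset_uIcc hy, Metric.ball_subset_closedBall ha⟩
  · exact .of_forall fun y _ a _ => (hGG' y _).comp_hasFDerivAt a (Λ y).hasFDerivAt

theorem natDegree_le_of_hasDerivWithinAt {S : Set ℝ} {t : ℝ} {k : ℕ}
    {A : ℝ → ℝ[X]} {A' : ℝ[X]}
    (hS : UniqueDiffWithinAt ℝ S t) (ht : t ∈ S) (hA : ∀ s ∈ S, (A s).natDegree ≤ k)
    (hder : ∀ y, HasDerivWithinAt (fun s => (A s).eval y) (A'.eval y) S t) :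
    A'.natDegree ≤ k := by
  have hnodes : HasDerivWithinAt (fun s j => (A s).eval (lagrangeNode k j))
      (fun j => A'.eval (lagrangeNode k j)) S t :=
    hasDerivWithinAt_pi.2 fun j => hder _
  have hA' : A' =
      Lagrange.interpolate univ (lagrangeNode k) fun j => A'.eval (lagrangeNode k j) := by
    refine Polynomial.funext fun y => hS.eq_deriv _ (hder y) ?_
    rw [← lagrangeEval_apply]
    exact ((lagrangeEval k y).hasFDerivAt.comp_hasDerivWithinAt t hnodes).congr
      (fun s hs => (lagrangeEval_eval_lagrangeNode (hA s hs) y).symm)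
      (lagrangeEval_eval_lagrangeNode (hA t ht) y).symm
  have hlt := Lagrange.degree_interpolate_lt (fun j => A'.eval (lagrangeNode k j))
    injOn_lagrangeNode
  rw [← hA', card_univ, Fintype.card_fin] at hlt
  exact natDegree_le_iff_coeff_eq_zero.2 fun _ hm => (degree_lt_iff_coeff_zero _ _).1 hlt _ hm

theorem hasDerivWithinAt_intervalIntegral_comp_eval {S : Set ℝ} {t : ℝ} {k : ℕ}
    {A : ℝ → ℝ[X]} {A' : ℝ[X]} {G G' : ℝ → ℝ → ℝ}
    (hG : Continuous (Function.uncurry G)) (hG' : Continuous (Function.uncurry G'))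
    (hGG' : ∀ y z, HasDerivAt (G y) (G' y z) z)
    (ht : t ∈ S) (hA : ∀ s ∈ S, (A s).natDegree ≤ k) (hA' : A'.natDegree ≤ k)
    (hder : ∀ y, HasDerivWithinAt (fun s => (A s).eval y) (A'.eval y) S t) (c d : ℝ) :
    HasDerivWithinAt (fun s => ∫ y in c..d, G y ((A s).eval y))
      (∫ y in c..d, G' y ((A t).eval y) * A'.eval y) S t := by
  have hnodes : HasDerivWithinAt (fun s j => (A s).eval (lagrangeNode k j))
      (fun j => A'.eval (lagrangeNode k j)) S t :=
    hasDerivWithinAt_pi.2 fun j => hder _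
  have h := (hasFDerivAt_intervalIntegral_comp_clm hG hG' hGG' continuous_lagrangeEval
    _ c d).comp_hasDerivWithinAt t hnodes
  have hint : Continuous fun y =>
      G' y (lagrangeEval k y fun j => (A t).eval (lagrangeNode k j)) • lagrangeEval k y :=
    (hG'.comp (continuous_id.prodMk (continuous_lagrangeEval.clm_apply continuous_const))).smul
      continuous_lagrangeEval
  rw [ContinuousLinearMap.intervalIntegral_apply (hint.intervalIntegrable c d)] at h
  simp only [smul_apply, smul_eq_mul, lagrangeEval_eval_lagrangeNode (hA t ht),
    lagrangeEval_eval_lagrangeNode hA'] at h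
  refine h.congr (fun s hs => ?_) ?_
  · simp [lagrangeEval_eval_lagrangeNode (hA s hs)]
  · simp [lagrangeEval_eval_lagrangeNode (hA t ht)]

theorem hasDerivWithinAt_sum_intervalIntegral_comp_eval {S : Set ℝ} {t : ℝ} {k : ℕ}
    {A : ℝ → Broken} {A' : Broken} {G G' : ℕ → ℝ → ℝ → ℝ}
    (hG : ∀ i, Continuous (Function.uncurry (G i)))
    (hG' : ∀ i, Continuous (Function.uncurry (G' i)))
    (hGG' : ∀ i y z, HasDerivAt (G i y) (G' i y z) z)
    (ht : t ∈ S) (hA : ∀ s ∈ S, DegLE k (A s)) (hA' : DegLE k A')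
    (hder : ∀ i y, HasDerivWithinAt (fun s => (A s i).eval y) ((A' i).eval y) S t)
    (x : ℕ → ℝ) (N : ℕ) :
    HasDerivWithinAt (fun s => ∑ i ∈ Icc 1 N, ∫ y in x (i - 1)..x i, G i y ((A s i).eval y))
      (ip x N (fun i y => G' i y ((A t i).eval y)) (ev A')) S t :=
  .fun_sum fun i _ => hasDerivWithinAt_intervalIntegral_comp_eval (hG i) (hG' i) (hGG' i) ht
    (fun s hs => hA s hs i) (hA' i) (hder i) _ _

lemma hasDerivWithinAt_avg {S : Set ℝ} {t : ℝ} {P : ℝ → Broken} {P' : Broken}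
    (hder : ∀ i y, HasDerivWithinAt (fun s => (P s i).eval y) ((P' i).eval y) S t)
    (x : ℕ → ℝ) (N i : ℕ) :
    HasDerivWithinAt (fun s => avg x N (P s) i) (avg x N P' i) S t := by
  unfold avg lv rv
  split_ifs <;> exact ((hder _ _).add (hder _ _)).div_const 2

lemma ip_comm (x : ℕ → ℝ) (N : ℕ) (F G : ℕ → ℝ → ℝ) :
    ip x N F G = ip x N G F := by
  simp only [ip, mul_comm]

section SummationByParts

variable {x : ℕ → ℝ} {N : ℕ}

lemma sum_Icc_pred_eq_sum_Icc_periodic {M : Type*} [AddCommMonoid M] (hN : 1 ≤ N)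
    (F : ℕ → ℕ → M) :
    ∑ i ∈ Icc 1 N, F i (i - 1) = ∑ i ∈ Icc 1 N, if i = N then F 1 0 else F (i + 1) i := by
  refine sum_nbij' (fun i => if i = 1 then N else i - 1) (fun i => if i = N then 1 else i + 1)
    ?_ ?_ ?_ ?_ ?_ <;> intro i hi <;> simp only [Finset.mem_Icc] at hi ⊢ <;>
    split_ifs <;> first | omega | (subst_vars; rfl) | (congr 1; omega)

lemma sum_eval_left_endpoint_mul (hN : 1 ≤ N) (P Q : Broken) :
    ∑ i ∈ Icc 1 N, (P i).eval (x (i - 1)) * (Q i).eval (x (i - 1))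
      = ∑ i ∈ Icc 1 N, rv x N P i * rv x N Q i := by
  rw [sum_Icc_pred_eq_sum_Icc_periodic hN fun i j => (P i).eval (x j) * (Q i).eval (x j)]
  refine sum_congr rfl fun i _ => ?_
  unfold rv
  split_ifs <;> rfl

lemma bt_eq_sum_mul_jmp (hN : 1 ≤ N) {φ : ℕ → ℝ} (hφ : IsTrace N φ) (v : Broken) :
    bt x N φ v = ∑ i ∈ Icc 1 N, φ i * jmp x N v i := by
  have hleft : ∑ i ∈ Icc 1 N, φ (i - 1) * (v i).eval (x (i - 1))
      = ∑ i ∈ Icc 1 N, φ i * rv x N v i := by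
    rw [sum_Icc_pred_eq_sum_Icc_periodic hN fun i j => φ j * (v i).eval (x j)]
    refine sum_congr rfl fun i _ => ?_
    unfold rv
    split_ifs with h
    · rw [hφ, h]
    · rfl
  simp only [bt, sum_sub_distrib, hleft, jmp, lv, mul_sub]

lemma ip_ev_dx_add_ip_ev_dx (hN : 1 ≤ N) (P Q : Broken) :
    ip x N (ev P) (ev (dx Q)) + ip x N (ev Q) (ev (dx P))
      = ∑ i ∈ Icc 1 N, (avg x N P i * jmp x N Q i + avg x N Q i * jmp x N P i) := by
  have hftc : ∀ i, (∫ y in x (i - 1)..x i, (P i).eval y * (Q i).derivative.eval y)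
      + ∫ y in x (i - 1)..x i, (Q i).eval y * (P i).derivative.eval y
      = lv x P i * lv x Q i - (P i).eval (x (i - 1)) * (Q i).eval (x (i - 1)) := by
    intro i
    have hPQ := intervalIntegral.integral_deriv_mul_eq_sub (a := x (i - 1)) (b := x i)
      (fun y _ => (P i).hasDerivAt y) (fun y _ => (Q i).hasDerivAt y)
      ((Polynomial.continuous _).intervalIntegrable _ _)
      ((Polynomial.continuous _).intervalIntegrable _ _)
    rw [← intervalIntegral.integral_add (Continuous.intervalIntegrable (by fun_prop) _ _)
      (Continuous.intervalIntegrable (by fun_prop) _ _), lv, lv, ← hPQ]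
    exact intervalIntegral.integral_congr fun y _ => by ring
  simp only [ip, ev, dx, ← sum_add_distrib, hftc, sum_sub_distrib,
    sum_eval_left_endpoint_mul hN]
  rw [← sum_sub_distrib]
  refine sum_congr rfl fun i _ => ?_
  simp only [avg, jmp]
  ring

lemma ip_ev_dx_self (hN : 1 ≤ N) (P : Broken) :
    ip x N (ev P) (ev (dx P)) = ∑ i ∈ Icc 1 N, avg x N P i * jmp x N P i := by
  have h := ip_ev_dx_add_ip_ev_dx (x := x) hN P P
  simp only [← two_mul, ← mul_sum] at h
  linarith

lemma bt_eq_sum_avg_mul_jmp_add (hN : 1 ≤ N) {φ : ℕ → ℝ} (hφ : IsTrace N φ)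
    {P U : Broken} {τ : ℝ}
    (hφi : ∀ i ∈ Finset.Icc 1 N, φ i = avg x N P i + τ * jmp x N U i) (W : Broken) :
    bt x N φ W = ∑ i ∈ Icc 1 N, avg x N P i * jmp x N W i
      + τ * ∑ i ∈ Icc 1 N, jmp x N W i * jmp x N U i := by
  rw [bt_eq_sum_mul_jmp hN hφ, mul_sum, ← sum_add_distrib]
  refine sum_congr rfl fun i hi => ?_
  rw [hφi i hi]
  ring

end SummationByParts

namespace Scheme

variable {x : ℕ → ℝ} {N k : ℕ} {T ε : ℝ} {f : ℝ → ℝ}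
  {u q p ut qt pt : ℝ → Broken} {uh qh ph : ℝ → ℕ → ℝ} {t : ℝ}

lemma degqt (hS : Scheme x N k T ε f u q p ut qt pt uh qh ph) (hT : 0 < T)
    (ht : t ∈ Set.Icc 0 T) : DegLE k (qt t) := fun i =>
  natDegree_le_of_hasDerivWithinAt (uniqueDiffOn_Icc hT t ht) ht (fun s hs => hS.degq s hs i)
    (hS.dq t ht i)

lemma hasDerivWithinAt_hamiltonian (hS : Scheme x N k T ε f u q p ut qt pt uh qh ph)
    (hT : 0 < T) {V : ℝ → ℝ} (hf : Continuous f) (hV : ∀ y, HasDerivAt V (f y) y)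
    (ht : t ∈ Set.Icc 0 T) :
    HasDerivWithinAt (fun s => ∑ i ∈ Finset.Icc 1 N, ∫ y in x (i - 1)..x i,
        ((ε / 2) * (q s i).eval y ^ 2 - V ((u s i).eval y)))
      (ε * ip x N (ev (q t)) (ev (qt t)) - ip x N (fun i y => f ((u t i).eval y)) (ev (ut t)))
      (Set.Icc 0 T) t := by
  have hVc : Continuous V := continuous_iff_continuousAt.2 fun z => (hV z).continuousAt
  have hq := hasDerivWithinAt_sum_intervalIntegral_comp_eval
    (G := fun _ _ z => ε / 2 * z ^ 2) (G' := fun _ _ z => ε * z) (fun _ => by fun_prop)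
    (fun _ => by fun_prop)
    (fun _ _ z => ((hasDerivAt_pow 2 z).const_mul (ε / 2)).congr_deriv (by ring))
    ht hS.degq (hS.degqt hT ht) (hS.dq t ht) x N
  have hu := hasDerivWithinAt_sum_intervalIntegral_comp_eval
    (G := fun _ _ z => V z) (G' := fun _ _ z => f z) (fun _ => hVc.comp continuous_snd)
    (fun _ => hf.comp continuous_snd) (fun _ _ z => hV z) ht hS.degu (hS.degut t ht)
    (hS.du t ht) x N
  have hsplit : ∀ s, ∑ i ∈ Finset.Icc 1 N, ∫ y in x (i - 1)..x i,
      ((ε / 2) * (q s i).eval y ^ 2 - V ((u s i).eval y))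
      = (∑ i ∈ Finset.Icc 1 N, ∫ y in x (i - 1)..x i, (ε / 2) * (q s i).eval y ^ 2)
        - ∑ i ∈ Finset.Icc 1 N, ∫ y in x (i - 1)..x i, V ((u s i).eval y) := fun s => by
    rw [← sum_sub_distrib]
    exact sum_congr rfl fun i _ => intervalIntegral.integral_sub
      (Continuous.intervalIntegrable (by fun_prop) _ _)
      ((hVc.comp (Polynomial.continuous _)).intervalIntegrable _ _)
  refine ((hq.sub hu).congr (fun s _ => hsplit s) (hsplit t)).congr_deriv ?_
  simp only [ip, ev, mul_sum, ← intervalIntegral.integral_const_mul, mul_assoc]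

lemma eq1_timeDeriv (hS : Scheme x N k T ε f u q p ut qt pt uh qh ph)
    (hT : 0 < T) (hN : 1 ≤ N)
    (huh : ∀ s ∈ Set.Icc (0:ℝ) T, ∀ i ∈ Finset.Icc 1 N, uh s i = avg x N (u s) i)
    (ht : t ∈ Set.Icc 0 T) :
    ip x N (ev (q t)) (ev (qt t)) + ip x N (ev (dx (q t))) (ev (ut t))
      - ∑ i ∈ Finset.Icc 1 N, avg x N (ut t) i * jmp x N (q t) i = 0 := by
  have hq := hasDerivWithinAt_sum_intervalIntegral_comp_eval
    (G := fun i y z => z * (q t i).eval y) (G' := fun i y _ => (q t i).eval y)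
    (fun _ => by fun_prop) (fun _ => by fun_prop)
    (fun _ _ z => (hasDerivAt_id z).mul_const _ |>.congr_deriv (one_mul _))
    ht hS.degq (hS.degqt hT ht) (hS.dq t ht) x N
  have hu := hasDerivWithinAt_sum_intervalIntegral_comp_eval
    (G := fun i y z => z * (dx (q t) i).eval y) (G' := fun i y _ => (dx (q t) i).eval y)
    (fun _ => by fun_prop) (fun _ => by fun_prop)
    (fun _ _ z => (hasDerivAt_id z).mul_const _ |>.congr_deriv (one_mul _))
    ht hS.degu (hS.degut t ht) (hS.du t ht) x N
  have hbt := HasDerivWithinAt.fun_sum (u := Finset.Icc 1 N) fun i _ =>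
    (hasDerivWithinAt_avg (hS.du t ht) x N i).mul_const (jmp x N (q t) i)
  have heq1 : ∀ s ∈ Set.Icc 0 T,
      ip x N (ev (q s)) (ev (q t)) + ip x N (ev (u s)) (ev (dx (q t)))
      - ∑ i ∈ Finset.Icc 1 N, avg x N (u s) i * jmp x N (q t) i = 0 := fun s hs => by
    rw [← hS.eq1 s hs (q t) (hS.degq t ht), bt_eq_sum_mul_jmp hN (hS.trace_u s hs)]
    exact congrArg _ (sum_congr rfl fun i hi => by rw [huh s hs i hi])
  exact (uniqueDiffOn_Icc hT t ht).eq_deriv _ ((hq.add hu).sub hbt)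
    ((hasDerivWithinAt_const t _ 0).congr heq1 (heq1 t ht))

lemma energy_identity (hS : Scheme x N k T ε f u q p ut qt pt uh qh ph) (hT : 0 < T)
    (hN : 1 ≤ N) {τqu τpu : ℝ → ℝ}
    (huh : ∀ s ∈ Set.Icc (0:ℝ) T, ∀ i ∈ Finset.Icc 1 N, uh s i = avg x N (u s) i)
    (hqh : ∀ i ∈ Finset.Icc 1 N, qh t i = avg x N (q t) i + τqu t * jmp x N (u t) i)
    (hph : ∀ i ∈ Finset.Icc 1 N, ph t i = avg x N (p t) i + τpu t * jmp x N (u t) i)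
    (hcons : τpu t * (∑ i ∈ Finset.Icc 1 N, jmp x N (p t) i * jmp x N (u t) i)
        + ε * τqu t * (∑ i ∈ Finset.Icc 1 N, jmp x N (ut t) i * jmp x N (u t) i) = 0)
    (ht : t ∈ Set.Icc 0 T) :
    ε * ip x N (ev (q t)) (ev (qt t))
      - ip x N (fun i y => f ((u t i).eval y)) (ev (ut t)) = 0 := by
  have heq1 := hS.eq1_timeDeriv hT hN huh ht
  have heq2 := hS.eq2 t ht (ut t) (hS.degut t ht)
  have heq3 := hS.eq3 t ht (p t) (hS.degp t ht)
  rw [bt_eq_sum_avg_mul_jmp_add hN (hS.trace_q t ht) hqh] at heq2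
  rw [bt_eq_sum_avg_mul_jmp_add hN (hS.trace_p t ht) hph] at heq3
  have hcross := ip_ev_dx_add_ip_ev_dx (x := x) hN (ut t) (q t)
  rw [sum_add_distrib] at hcross
  have hself := ip_ev_dx_self (x := x) hN (p t)
  rw [ip_comm x N (ev (dx (q t)))] at heq1
  rw [ip_comm x N (ev (ut t))] at heq3
  linear_combination ε * heq1 - ε * hcross + heq2 - heq3 - hself + hcons

end Scheme

end DG

/-- Theorem 2.1, Hamiltonian part: with the traces (2.4) and the constraint (2.5b) on
the stabilization parameters, the discrete Hamiltonian is conserved.  (The required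
differentiability in `t` of `u_h` and `q_h` is part of the scheme, via `ut` and `qt`.) -/
theorem dg_hamiltonian_part
    (a b : ℝ) (N k : ℕ) (x : ℕ → ℝ) (hmesh : DG.Mesh a b N x)
    (T ε : ℝ) (hT : 0 < T) (f V : ℝ → ℝ) (hf : Continuous f)
    (hV : ∀ y : ℝ, HasDerivAt V (f y) y)
    (u q p ut qt pt : ℝ → DG.Broken) (uh qh ph : ℝ → ℕ → ℝ)
    (hS : DG.Scheme x N k T ε f u q p ut qt pt uh qh ph)
    (τqu τpu : ℝ → ℝ)
    (huh : ∀ t ∈ Set.Icc (0:ℝ) T, ∀ i ∈ Finset.Icc 1 N,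
      uh t i = DG.avg x N (u t) i)
    (hqh : ∀ t ∈ Set.Icc (0:ℝ) T, ∀ i ∈ Finset.Icc 1 N,
      qh t i = DG.avg x N (q t) i + τqu t * DG.jmp x N (u t) i)
    (hph : ∀ t ∈ Set.Icc (0:ℝ) T, ∀ i ∈ Finset.Icc 1 N,
      ph t i = DG.avg x N (p t) i + τpu t * DG.jmp x N (u t) i)
    (hconsB : ∀ t ∈ Set.Icc (0:ℝ) T,
      τpu t * (∑ i ∈ Finset.Icc 1 N, DG.jmp x N (p t) i * DG.jmp x N (u t) i)
        + ε * τqu t * (∑ i ∈ Finset.Icc 1 N, DG.jmp x N (ut t) i * DG.jmp x N (u t) i)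
        = 0) :
    ∀ t₁ ∈ Set.Icc (0:ℝ) T, ∀ t₂ ∈ Set.Icc (0:ℝ) T,
      (∑ i ∈ Finset.Icc 1 N, ∫ y in (x (i-1))..(x i),
          ((ε/2) * ((q t₁) i).eval y ^ 2 - V (((u t₁) i).eval y)))
        = ∑ i ∈ Finset.Icc 1 N, ∫ y in (x (i-1))..(x i),
            ((ε/2) * ((q t₂) i).eval y ^ 2 - V (((u t₂) i).eval y)) := by
  intro t₁ h₁ t₂ h₂
  have hH : ∀ t ∈ Set.Icc (0:ℝ) T, HasDerivWithinAt (fun s => ∑ i ∈ Finset.Icc 1 N,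
      ∫ y in (x (i-1))..(x i), ((ε/2) * ((q s) i).eval y ^ 2 - V (((u s) i).eval y)))
      0 (Set.Icc 0 T) t := fun t ht => by
    simpa only [hS.energy_identity hT hmesh.hN huh (hqh t ht) (hph t ht) (hconsB t ht) ht]
      using hS.hasDerivWithinAt_hamiltonian hT hf hV ht
  simpa [sub_eq_zero, abs_nonpos_iff] using
    (convex_Icc (0:ℝ) T).norm_image_sub_le_of_norm_hasDerivWithin_le
    (f' := fun _ => 0) (C := 0) hH (fun _ _ => by simp) h₂ h₁
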